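/- Fix states c, c¹, c² ∈ Δ_M and positive constants A, B₁, B₂ with A·c(m) = B₁·c¹(m) + B₂·c²(m) for all types m. Then the greedy value iterates with zero initialization satisfy A·V^t_greedy(c) ≤ B₁·V^t_greedy(c¹) + B₂·V^t_greedy(c²) for every t ≥ 0 (convexity of the value function over the belief simplex). -/

import Mathlib

open Finset

/-- Bayesian posterior belief after item `ℓ` is chosen from displayed set `w`. -/
noncomputable def post {M L : Type*} [Fintype M] (p : L → M → Finset L → ℝ)
    (c : M → ℝ) (ℓ : L) (w : Finset L) : M → ℝ :=
  fun m' => p ℓ m' w * c m' / (∑ m, p ℓ m w * c m)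

/-- The Q-function associated to a value function `V`. -/
noncomputable def Qfun {M L : Type*} [Fintype M] [Fintype L] (p : L → M → Finset L → ℝ)
    (γ : ℝ) (V : (M → ℝ) → ℝ) (w : Finset L) (c : M → ℝ) : ℝ :=
  ∑ m, ∑ ℓ, c m * p ℓ m w * (1 + γ * V (post p c ℓ w))

/-- Greedy value iteration: `V⁰ = 0` and `Vᵗ(c) = max_{w ∈ G} Q_{Vᵗ⁻¹}(w, c)`. -/
noncomputable def Vg {M L : Type*} [Fintype M] [Fintype L] (p : L → M → Finset L → ℝ)
    (γ : ℝ) (G : Finset (Finset L)) (hG : G.Nonempty) : ℕ → (M → ℝ) → ℝ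
  | 0 => fun _ => 0
  | t + 1 => fun c => G.sup' hG (fun w => Qfun p γ (Vg p γ G hG t) w c)

/-!
The posterior is invariant under rescaling the prior, so each `Qfun p γ V w` is positively
homogeneous of degree one, and hence so is every `Vᵗ`. On the nonnegative orthant, writing
`Sₗ(c) = ∑ m, p ℓ m w * c m`, homogeneity turns `Sₗ(c) * V (post p c ℓ w)` into `V (pₗ ⊙ c)`, so
`Qfun p γ V w c = ∑ ℓ, (Sₗ(c) + γ V (pₗ ⊙ c))` is subadditive there as soon as `V` is. Thus every
`Vᵗ` is sublinear on the orthant, and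
`A Vᵗ(c) = Vᵗ(A c) = Vᵗ(B₁ c₁ + B₂ c₂) ≤ B₁ Vᵗ(c₁) + B₂ Vᵗ(c₂)`.
-/

section

variable {M L : Type*} [Fintype M] (p : L → M → Finset L → ℝ)

theorem post_smul {a : ℝ} (ha : a ≠ 0) (c : M → ℝ) (ℓ : L) (w : Finset L) :
    post p (a • c) ℓ w = post p c ℓ w := by
  funext m'
  simp only [post, Pi.smul_apply, smul_eq_mul, mul_left_comm _ a, ← Finset.mul_sum]
  exact mul_div_mul_left _ _ ha

theorem sum_smul_post {c : M → ℝ} {ℓ : L} {w : Finset L} (hpc : ∀ m, 0 ≤ p ℓ m w * c m) :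
    (∑ m, p ℓ m w * c m) • post p c ℓ w = fun m => p ℓ m w * c m := by
  funext m'
  rcases eq_or_ne (∑ m, p ℓ m w * c m) 0 with hS | hS
  · have hterm := (Finset.sum_eq_zero_iff_of_nonneg fun m _ => hpc m).mp hS
    simp [hS, hterm m' (Finset.mem_univ m')]
  · exact mul_div_cancel₀ _ hS

variable [Fintype L]

theorem Qfun_smul (γ : ℝ) (V : (M → ℝ) → ℝ) (w : Finset L) {a : ℝ} (ha : 0 ≤ a)
    (c : M → ℝ) : Qfun p γ V w (a • c) = a * Qfun p γ V w c := by
  rcases ha.eq_or_lt with rfl | ha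
  · simp [Qfun]
  · simp only [Qfun, post_smul p ha.ne', Pi.smul_apply, smul_eq_mul, Finset.mul_sum]
    exact Finset.sum_congr rfl fun m _ => Finset.sum_congr rfl fun ℓ _ => by ring

theorem Vg_smul (γ : ℝ) (G : Finset (Finset L)) (hG : G.Nonempty) (t : ℕ) {a : ℝ}
    (ha : 0 ≤ a) (c : M → ℝ) : Vg p γ G hG t (a • c) = a * Vg p γ G hG t c := by
  cases t with
  | zero => simp [Vg]
  | succ t =>
    simp only [Vg, Qfun_smul p γ _ _ ha]
    exact (Finset.mul₀_sup' ha _ G hG).symm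

variable {p}

theorem Qfun_eq_sum_of_nonneg (hp : ∀ ℓ m w, 0 ≤ p ℓ m w) (γ : ℝ) {V : (M → ℝ) → ℝ}
    (hV : ∀ a : ℝ, 0 ≤ a → ∀ c, V (a • c) = a * V c) (w : Finset L) {c : M → ℝ}
    (hc : 0 ≤ c) :
    Qfun p γ V w c = ∑ ℓ, (∑ m, p ℓ m w * c m + γ * V (fun m => p ℓ m w * c m)) := by
  rw [Qfun, Finset.sum_comm]
  refine Finset.sum_congr rfl fun ℓ _ => ?_
  have hpc : ∀ m, 0 ≤ p ℓ m w * c m := fun m => mul_nonneg (hp ℓ m w) (hc m)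
  have hS : 0 ≤ ∑ m, p ℓ m w * c m := Finset.sum_nonneg fun m _ => hpc m
  have hpost : (∑ m, p ℓ m w * c m) * V (post p c ℓ w) = V (fun m => p ℓ m w * c m) := by
    rw [← hV _ hS, sum_smul_post p hpc]
  rw [← hpost, ← Finset.sum_mul]
  simp only [mul_comm (c _) (p ℓ _ w)]
  ring

theorem Qfun_add_le (hp : ∀ ℓ m w, 0 ≤ p ℓ m w) {γ : ℝ} (hγ : 0 ≤ γ) {V : (M → ℝ) → ℝ}
    (hV : ∀ a : ℝ, 0 ≤ a → ∀ c, V (a • c) = a * V c)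
    (hVadd : ∀ x y : M → ℝ, 0 ≤ x → 0 ≤ y → V (x + y) ≤ V x + V y) (w : Finset L)
    {x y : M → ℝ} (hx : 0 ≤ x) (hy : 0 ≤ y) :
    Qfun p γ V w (x + y) ≤ Qfun p γ V w x + Qfun p γ V w y := by
  rw [Qfun_eq_sum_of_nonneg hp γ hV w (add_nonneg hx hy), Qfun_eq_sum_of_nonneg hp γ hV w hx,
    Qfun_eq_sum_of_nonneg hp γ hV w hy, ← Finset.sum_add_distrib]
  refine Finset.sum_le_sum fun ℓ _ => ?_
  have hsum : ∑ m, p ℓ m w * (x + y) m = ∑ m, p ℓ m w * x m + ∑ m, p ℓ m w * y m := by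
    simp only [Pi.add_apply, mul_add, Finset.sum_add_distrib]
  have hV_le : V (fun m => p ℓ m w * (x + y) m) ≤
      V (fun m => p ℓ m w * x m) + V (fun m => p ℓ m w * y m) := by
    have hsplit : (fun m => p ℓ m w * (x + y) m) =
        (fun m => p ℓ m w * x m) + fun m => p ℓ m w * y m :=
      funext fun m => mul_add _ _ _
    rw [hsplit]
    exact hVadd _ _ (fun m => mul_nonneg (hp ℓ m w) (hx m))
      (fun m => mul_nonneg (hp ℓ m w) (hy m))
  rw [hsum]
  linarith [mul_le_mul_of_nonneg_left hV_le hγ]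

theorem Vg_add_le (hp : ∀ ℓ m w, 0 ≤ p ℓ m w) {γ : ℝ} (hγ : 0 ≤ γ)
    (G : Finset (Finset L)) (hG : G.Nonempty) (t : ℕ) {x y : M → ℝ} (hx : 0 ≤ x)
    (hy : 0 ≤ y) : Vg p γ G hG t (x + y) ≤ Vg p γ G hG t x + Vg p γ G hG t y := by
  induction t generalizing x y with
  | zero => simp [Vg]
  | succ t ih =>
    refine Finset.sup'_le hG _ fun w hw => ?_
    calc Qfun p γ (Vg p γ G hG t) w (x + y)
        ≤ Qfun p γ (Vg p γ G hG t) w x + Qfun p γ (Vg p γ G hG t) w y :=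
          Qfun_add_le hp hγ (fun _ ha => Vg_smul p γ G hG t ha) (fun _ _ => ih) w hx hy
      _ ≤ Vg p γ G hG (t + 1) x + Vg p γ G hG (t + 1) y :=
          add_le_add (Finset.le_sup' (fun w => Qfun p γ _ w x) hw)
            (Finset.le_sup' (fun w => Qfun p γ _ w y) hw)

end

theorem greedy_value_convex_general {M L : Type*} [Fintype M] [Fintype L]
    (p : L → M → Finset L → ℝ) (γ : ℝ) (hγ : 0 ≤ γ)
    (G : Finset (Finset L)) (hG : G.Nonempty)
    (hp : ∀ (ℓ : L) (m : M) (w : Finset L), 0 ≤ p ℓ m w ∧ p ℓ m w ≤ 1)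
    (c c₁ c₂ : M → ℝ)
    (hc₁ : (∀ m, 0 ≤ c₁ m) ∧ ∑ m, c₁ m = 1)
    (hc₂ : (∀ m, 0 ≤ c₂ m) ∧ ∑ m, c₂ m = 1)
    (A B₁ B₂ : ℝ) (hA : 0 < A) (hB₁ : 0 < B₁) (hB₂ : 0 < B₂)
    (hAB : ∀ m, A * c m = B₁ * c₁ m + B₂ * c₂ m) (t : ℕ) :
    A * Vg p γ G hG t c ≤ B₁ * Vg p γ G hG t c₁ + B₂ * Vg p γ G hG t c₂ := by
  have hp₀ : ∀ ℓ m w, 0 ≤ p ℓ m w := fun ℓ m w => (hp ℓ m w).1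
  have hcomb : A • c = B₁ • c₁ + B₂ • c₂ := funext hAB
  calc A * Vg p γ G hG t c = Vg p γ G hG t (B₁ • c₁ + B₂ • c₂) := by
        rw [← hcomb, Vg_smul p γ G hG t hA.le]
    _ ≤ Vg p γ G hG t (B₁ • c₁) + Vg p γ G hG t (B₂ • c₂) :=
        Vg_add_le hp₀ hγ G hG t (smul_nonneg hB₁.le hc₁.1) (smul_nonneg hB₂.le hc₂.1)
    _ = B₁ * Vg p γ G hG t c₁ + B₂ * Vg p γ G hG t c₂ := by
        rw [Vg_smul p γ G hG t hB₁.le, Vg_smul p γ G hG t hB₂.le]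

/-- Convexity of the greedy value iterates over the belief simplex:
if `A c = B₁ c¹ + B₂ c²` componentwise then `A Vᵗ(c) ≤ B₁ Vᵗ(c¹) + B₂ Vᵗ(c²)`. -/
theorem greedy_value_convex {M L : Type*} [Fintype M] [Fintype L]
    (p : L → M → Finset L → ℝ) (γ : ℝ) (hγ : 0 ≤ γ)
    (G : Finset (Finset L)) (hG : G.Nonempty)
    (hp : ∀ (ℓ : L) (m : M) (w : Finset L), 0 ≤ p ℓ m w ∧ p ℓ m w ≤ 1)
    (c c₁ c₂ : M → ℝ)
    (hc : (∀ m, 0 ≤ c m) ∧ ∑ m, c m = 1)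
    (hc₁ : (∀ m, 0 ≤ c₁ m) ∧ ∑ m, c₁ m = 1)
    (hc₂ : (∀ m, 0 ≤ c₂ m) ∧ ∑ m, c₂ m = 1)
    (A B₁ B₂ : ℝ) (hA : 0 < A) (hB₁ : 0 < B₁) (hB₂ : 0 < B₂)
    (hAB : ∀ m, A * c m = B₁ * c₁ m + B₂ * c₂ m) (t : ℕ) :
    A * Vg p γ G hG t c ≤ B₁ * Vg p γ G hG t c₁ + B₂ * Vg p γ G hG t c₂ :=
  greedy_value_convex_general p γ hγ G hG hp c c₁ c₂ hc₁ hc₂ A B₁ B₂ hA hB₁ hB₂ hAB t
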